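/- Exactness of the symbol sequence for the extended Rapcsák operator: a pair (B_Γ, B_C), where B_Γ : V × V × V → ℝ is trilinear with B_Γ(X,Y,Z) = −B_Γ(X,Z,Y) and B_Γ(X,Y,Z) = 0 whenever Y or Z lies in the vertical subspace {0} × (Fin n → ℝ), and B_C is a symmetric bilinear form on V, lies in the image of σ₃(P₂) (i.e. there exists a symmetric trilinear form A on V with B_Γ(X,Y,Z) = 2(A(X, P_h Y, J Z) − A(X, P_h Z, J Y)) and B_C(X,Y) = A(X, Y, C) for all X, Y, Z) if and only if for all X, Y, Z ∈ V: (i) B_Γ(P_h X, Y, Z) + B_Γ(P_h Y, Z, X) + B_Γ(P_h Z, X, Y) = 0; (ii) B_Γ(J X, Y, Z) + B_Γ(J Y, Z, X) + B_Γ(J Z, X, Y) = 0; (iii) (1/2)·B_Γ(C, X, Y) − B_C(P_h X, J Y) + B_C(P_h Y, J X) = 0. -/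
import Mathlib


set_option synthInstance.maxHeartbeats 1000000
set_option maxHeartbeats 1000000

noncomputable section

/-- The pointwise model `V = (Fin n → ℝ) × (Fin n → ℝ)` of the double tangent space
`T_x(TM)` for a spray on an `n`-dimensional manifold, in an adapted basis. -/
abbrev V (n : ℕ) : Type := (Fin n → ℝ) × (Fin n → ℝ)

/-- The vertical endomorphism `J (x, y) = (0, x)`. -/
def Jmap (n : ℕ) : V n →ₗ[ℝ] V n where
  toFun p := (0, p.1)
  map_add' a b := by simp
  map_smul' c a := by simp

/-- The horizontal projector `P_h (x, y) = (x, 0)`. -/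
def Ph (n : ℕ) : V n →ₗ[ℝ] V n where
  toFun p := (p.1, 0)
  map_add' a b := by simp
  map_smul' c a := by simp

/-- The `j`-th standard basis vector of `Fin n → ℝ`, indexed by `1 ≤ j ≤ n`
(zero if `j` is out of range). -/
def dlt (n j : ℕ) : Fin n → ℝ := fun i => if (i : ℕ) + 1 = j then 1 else 0

/-- The horizontal basis vector `h_j`, `1 ≤ j ≤ n`. -/
def hvec (n j : ℕ) : V n := (dlt n j, 0)

/-- The vertical basis vector `v_j`, `1 ≤ j ≤ n`. -/
def vvec (n j : ℕ) : V n := (0, dlt n j)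

/-- The spray vector `S = h_n`. -/
def Svec (n : ℕ) : V n := hvec n n

/-- The Liouville vector `C = v_n = J S`. -/
def Cvec (n : ℕ) : V n := vvec n n

/-- Bilinear forms on `V n`. -/
abbrev Bil (n : ℕ) := V n →ₗ[ℝ] V n →ₗ[ℝ] ℝ

/-- Trilinear forms on `V n` (bundled). -/
abbrev Tri (n : ℕ) := V n →ₗ[ℝ] V n →ₗ[ℝ] V n →ₗ[ℝ] ℝ

namespace Rap

variable {n : ℕ}

lemma Ph_apply (p : V n) : Ph n p = (p.1, 0) := rfl
lemma Jmap_apply (p : V n) : Jmap n p = (0, p.1) := rfl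

lemma mkh_add (x x' : Fin n → ℝ) : ((x + x', 0) : V n) = (x, 0) + (x', 0) := by
  rw [Prod.mk_add_mk, add_zero]
lemma mkv_add (x x' : Fin n → ℝ) : ((0, x + x') : V n) = (0, x) + (0, x') := by
  rw [Prod.mk_add_mk, add_zero]
lemma mkh_smul (c : ℝ) (x : Fin n → ℝ) : ((c • x, 0) : V n) = c • ((x, 0) : V n) := by
  rw [Prod.smul_mk, smul_zero]
lemma mkv_smul (c : ℝ) (x : Fin n → ℝ) : ((0, c • x) : V n) = c • ((0, x) : V n) := by
  rw [Prod.smul_mk, smul_zero]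

def ell (n : ℕ) (u : Fin n → ℝ) : ℝ :=
  if h : 0 < n then u ⟨n - 1, Nat.sub_lt h one_pos⟩ else 0

lemma ell_add (u v : Fin n → ℝ) : ell n (u + v) = ell n u + ell n v := by
  unfold ell; split <;> simp
lemma ell_smul (c : ℝ) (u : Fin n → ℝ) : ell n (c • u) = c * ell n u := by
  unfold ell; split <;> simp
lemma ell_zero : ell n (0 : Fin n → ℝ) = 0 := by
  unfold ell; split <;> simp

def dl (n : ℕ) : Fin n → ℝ := dlt n n

lemma ell_dl (hn : 1 ≤ n) : ell n (dl n) = 1 := by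
  unfold ell dl dlt
  have h : 0 < n := hn
  rw [dif_pos h]
  simp [Nat.sub_add_cancel hn]

def Gf (BG : Tri n) (x y z : Fin n → ℝ) : ℝ := BG (x, 0) (y, 0) (z, 0)
def Hf (BG : Tri n) (x y z : Fin n → ℝ) : ℝ := BG (0, x) (y, 0) (z, 0)
def Bhh (BC : Bil n) (x y : Fin n → ℝ) : ℝ := BC (x, 0) (y, 0)
def Bhv (BC : Bil n) (x y : Fin n → ℝ) : ℝ := BC (x, 0) (0, y)
def Bvv (BC : Bil n) (x y : Fin n → ℝ) : ℝ := BC (0, x) (0, y)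

def Qhh (BG : Tri n) (BC : Bil n) (x y : Fin n → ℝ) : ℝ :=
  Bhh BC x y - (Gf BG x y (dl n) + Gf BG y x (dl n)) / 6
def Qhv (BG : Tri n) (BC : Bil n) (x y : Fin n → ℝ) : ℝ :=
  Bhv BC x y - (Hf BG y x (dl n) + Hf BG (dl n) x y) / 6
def Qvv (BC : Bil n) (x y : Fin n → ℝ) : ℝ := Bvv BC x y

def sgen (n : ℕ) (q : (Fin n → ℝ) → (Fin n → ℝ) → ℝ) (x y z : Fin n → ℝ) : ℝ :=
  q x y * ell n z + q y z * ell n x + q z x * ell n y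
  - ell n x * ell n y * q z (dl n) - ell n y * ell n z * q x (dl n)
  - ell n z * ell n x * q y (dl n)
  + ell n x * ell n y * ell n z * q (dl n) (dl n)

def bf (BG : Tri n) (BC : Bil n) (x y z : Fin n → ℝ) : ℝ :=
  (Gf BG x y z + Gf BG y x z) / 6 + sgen n (Qhh BG BC) x y z
def cf (BG : Tri n) (BC : Bil n) (a b c : Fin n → ℝ) : ℝ :=
  (Hf BG b a c + Hf BG c a b) / 6 + sgen n (Qhv BG BC) a b c
def df (BC : Bil n) (a b c : Fin n → ℝ) : ℝ := sgen n (Qvv BC) a b c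

def Af (BG : Tri n) (BC : Bil n) (X Y Z : V n) : ℝ :=
  bf BG BC X.1 Y.1 Z.2 + bf BG BC Y.1 Z.1 X.2 + bf BG BC Z.1 X.1 Y.2
  + cf BG BC X.1 Y.2 Z.2 + cf BG BC Y.1 Z.2 X.2 + cf BG BC Z.1 X.2 Y.2
  + df BC X.2 Y.2 Z.2

lemma Af_add3 (BG : Tri n) (BC : Bil n) (X Y Z Z' : V n) :
    Af BG BC X Y (Z + Z') = Af BG BC X Y Z + Af BG BC X Y Z' := by
  simp only [Af, bf, cf, df, sgen, Qhh, Qhv, Qvv, Bhh, Bhv, Bvv, Gf, Hf,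
    Prod.fst_add, Prod.snd_add, mkh_add, mkv_add, map_add, LinearMap.add_apply, ell_add]
  ring

lemma Af_smul3 (BG : Tri n) (BC : Bil n) (c : ℝ) (X Y Z : V n) :
    Af BG BC X Y (c • Z) = c * Af BG BC X Y Z := by
  simp only [Af, bf, cf, df, sgen, Qhh, Qhv, Qvv, Bhh, Bhv, Bvv, Gf, Hf,
    Prod.smul_fst, Prod.smul_snd, mkh_smul, mkv_smul, map_smul, LinearMap.smul_apply,
    smul_eq_mul, ell_smul]
  ring

end Rap

namespace Rap
variable {n : ℕ}

lemma Af_add1 (BG : Tri n) (BC : Bil n) (X X' Y Z : V n) :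
    Af BG BC (X + X') Y Z = Af BG BC X Y Z + Af BG BC X' Y Z := by
  simp only [Af, bf, cf, df, sgen, Qhh, Qhv, Qvv, Bhh, Bhv, Bvv, Gf, Hf,
    Prod.fst_add, Prod.snd_add, mkh_add, mkv_add, map_add, LinearMap.add_apply, ell_add]
  ring

lemma Af_smul1 (BG : Tri n) (BC : Bil n) (c : ℝ) (X Y Z : V n) :
    Af BG BC (c • X) Y Z = c * Af BG BC X Y Z := by
  simp only [Af, bf, cf, df, sgen, Qhh, Qhv, Qvv, Bhh, Bhv, Bvv, Gf, Hf,
    Prod.smul_fst, Prod.smul_snd, mkh_smul, mkv_smul, map_smul, LinearMap.smul_apply,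
    smul_eq_mul, ell_smul]
  ring

lemma Af_add2 (BG : Tri n) (BC : Bil n) (X Y Y' Z : V n) :
    Af BG BC X (Y + Y') Z = Af BG BC X Y Z + Af BG BC X Y' Z := by
  simp only [Af, bf, cf, df, sgen, Qhh, Qhv, Qvv, Bhh, Bhv, Bvv, Gf, Hf,
    Prod.fst_add, Prod.snd_add, mkh_add, mkv_add, map_add, LinearMap.add_apply, ell_add]
  ring

lemma Af_smul2 (BG : Tri n) (BC : Bil n) (c : ℝ) (X Y Z : V n) :
    Af BG BC X (c • Y) Z = c * Af BG BC X Y Z := by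
  simp only [Af, bf, cf, df, sgen, Qhh, Qhv, Qvv, Bhh, Bhv, Bvv, Gf, Hf,
    Prod.smul_fst, Prod.smul_snd, mkh_smul, mkv_smul, map_smul, LinearMap.smul_apply,
    smul_eq_mul, ell_smul]
  ring

def Atri (BG : Tri n) (BC : Bil n) : Tri n where
  toFun X :=
  { toFun := fun Y =>
    { toFun := fun Z => Af BG BC X Y Z
      map_add' := Af_add3 BG BC X Y
      map_smul' := fun c Z => Af_smul3 BG BC c X Y Z }
    map_add' := fun Y Y' => LinearMap.ext fun Z => Af_add2 BG BC X Y Y' Z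
    map_smul' := fun c Y => LinearMap.ext fun Z => Af_smul2 BG BC c X Y Z }
  map_add' X X' := LinearMap.ext fun Y => LinearMap.ext fun Z => Af_add1 BG BC X X' Y Z
  map_smul' c X := LinearMap.ext fun Y => LinearMap.ext fun Z => Af_smul1 BG BC c X Y Z

lemma Atri_apply (BG : Tri n) (BC : Bil n) (X Y Z : V n) :
    Atri BG BC X Y Z = Af BG BC X Y Z := rfl

end Rap

namespace Rap
variable {n : ℕ}

section sgenLemmas
variable {q : (Fin n → ℝ) → (Fin n → ℝ) → ℝ}

lemma sgen_swap12 (hq : ∀ a b, q a b = q b a) (x y z : Fin n → ℝ) : sgen n q x y z = sgen n q y x z := by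
  simp only [sgen]
  linear_combination ell n z * hq x y + ell n x * hq y z + ell n y * hq z x

lemma sgen_swap23 (hq : ∀ a b, q a b = q b a) (x y z : Fin n → ℝ) : sgen n q x y z = sgen n q x z y := by
  simp only [sgen]
  linear_combination ell n z * hq x y + ell n x * hq y z + ell n y * hq z x

lemma sgen_slice (hq : ∀ a b, q a b = q b a) (hn : 1 ≤ n) (x y : Fin n → ℝ) : sgen n q x y (dl n) = q x y := by
  simp only [sgen, ell_dl hn]
  linear_combination ell n y * hq (dl n) x

end sgenLemmas

section zeroLemmas
variable (BG : Tri n) (BC : Bil n)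

lemma Gf_zero1 (y z : Fin n → ℝ) : Gf BG 0 y z = 0 := by
  simp [Gf, Prod.mk_zero_zero]
lemma Gf_zero2 (x z : Fin n → ℝ) : Gf BG x 0 z = 0 := by
  simp [Gf, Prod.mk_zero_zero]
lemma Gf_zero3 (x y : Fin n → ℝ) : Gf BG x y 0 = 0 := by
  simp [Gf, Prod.mk_zero_zero]
lemma Hf_zero1 (y z : Fin n → ℝ) : Hf BG 0 y z = 0 := by
  simp [Hf, Prod.mk_zero_zero]
lemma Hf_zero2 (x z : Fin n → ℝ) : Hf BG x 0 z = 0 := by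
  simp [Hf, Prod.mk_zero_zero]
lemma Hf_zero3 (x y : Fin n → ℝ) : Hf BG x y 0 = 0 := by
  simp [Hf, Prod.mk_zero_zero]
lemma Bhh_zero1 (y : Fin n → ℝ) : Bhh BC 0 y = 0 := by simp [Bhh, Prod.mk_zero_zero]
lemma Bhh_zero2 (x : Fin n → ℝ) : Bhh BC x 0 = 0 := by simp [Bhh, Prod.mk_zero_zero]
lemma Bhv_zero1 (y : Fin n → ℝ) : Bhv BC 0 y = 0 := by simp [Bhv, Prod.mk_zero_zero]
lemma Bhv_zero2 (x : Fin n → ℝ) : Bhv BC x 0 = 0 := by simp [Bhv, Prod.mk_zero_zero]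
lemma Bvv_zero1 (y : Fin n → ℝ) : Bvv BC 0 y = 0 := by simp [Bvv, Prod.mk_zero_zero]
lemma Bvv_zero2 (x : Fin n → ℝ) : Bvv BC x 0 = 0 := by simp [Bvv, Prod.mk_zero_zero]

lemma Qhh_zero1 (y : Fin n → ℝ) : Qhh BG BC 0 y = 0 := by
  simp [Qhh, Bhh_zero1, Gf_zero1, Gf_zero2]
lemma Qhh_zero2 (x : Fin n → ℝ) : Qhh BG BC x 0 = 0 := by
  simp [Qhh, Bhh_zero2, Gf_zero1, Gf_zero2]
lemma Qhv_zero1 (y : Fin n → ℝ) : Qhv BG BC 0 y = 0 := by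
  simp [Qhv, Bhv_zero1, Hf_zero1, Hf_zero2]
lemma Qhv_zero2 (x : Fin n → ℝ) : Qhv BG BC x 0 = 0 := by
  simp [Qhv, Bhv_zero2, Hf_zero1, Hf_zero2, Hf_zero3]
lemma Qvv_zero1 (y : Fin n → ℝ) : Qvv BC 0 y = 0 := by simp [Qvv, Bvv_zero1]
lemma Qvv_zero2 (x : Fin n → ℝ) : Qvv BC x 0 = 0 := by simp [Qvv, Bvv_zero2]

lemma bf_zero1 (x z : Fin n → ℝ) : bf BG BC 0 x z = 0 := by
  simp [bf, sgen, Gf_zero1, Gf_zero2, Qhh_zero1, Qhh_zero2, ell_zero]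
lemma bf_zero2 (x z : Fin n → ℝ) : bf BG BC x 0 z = 0 := by
  simp [bf, sgen, Gf_zero1, Gf_zero2, Qhh_zero1, Qhh_zero2, ell_zero]
lemma cf_zero1 (b c : Fin n → ℝ) : cf BG BC 0 b c = 0 := by
  simp [cf, sgen, Hf_zero2, Qhv_zero1, Qhv_zero2, ell_zero]
lemma cf_zero2 (a c : Fin n → ℝ) : cf BG BC a 0 c = 0 := by
  simp [cf, sgen, Hf_zero1, Hf_zero3, Qhv_zero1, Qhv_zero2, ell_zero]
lemma df_zero2 (a c : Fin n → ℝ) : df BC a 0 c = 0 := by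
  simp [df, sgen, Qvv_zero1, Qvv_zero2, ell_zero]

end zeroLemmas
end Rap

namespace Rap
variable {n : ℕ} (BG : Tri n) (BC : Bil n)

lemma Qhh_symm (hB : ∀ a b, Bhh BC a b = Bhh BC b a) (x y : Fin n → ℝ) :
    Qhh BG BC x y = Qhh BG BC y x := by
  simp only [Qhh]; linear_combination hB x y

lemma Qhv_symm (hHanti : ∀ a b c, Hf BG a b c = - Hf BG a c b)
    (hHcyc : ∀ a b c, Hf BG a b c + Hf BG b c a + Hf BG c a b = 0)
    (h3 : ∀ x y, (1/2 : ℝ) * Hf BG (dl n) x y - Bhv BC x y + Bhv BC y x = 0)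
    (x y : Fin n → ℝ) : Qhv BG BC x y = Qhv BG BC y x := by
  simp only [Qhv]
  linarith [h3 x y, hHanti (dl n) x y, hHcyc (dl n) x y, hHanti y x (dl n)]

lemma Qvv_symm (hB : ∀ a b, Bvv BC a b = Bvv BC b a) (x y : Fin n → ℝ) :
    Qvv BC x y = Qvv BC y x := hB x y

lemma bf_symm12 (hQ : ∀ a b, Qhh BG BC a b = Qhh BG BC b a) (x y z : Fin n → ℝ) :
    bf BG BC x y z = bf BG BC y x z := by
  simp only [bf]
  linear_combination sgen_swap12 hQ x y z

lemma cf_symm23 (hQ : ∀ a b, Qhv BG BC a b = Qhv BG BC b a) (a b c : Fin n → ℝ) :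
    cf BG BC a b c = cf BG BC a c b := by
  simp only [cf]
  linear_combination sgen_swap23 hQ a b c

lemma Af_swap12 (hQhh : ∀ a b, Qhh BG BC a b = Qhh BG BC b a)
    (hQhv : ∀ a b, Qhv BG BC a b = Qhv BG BC b a)
    (hQvv : ∀ a b, Qvv BC a b = Qvv BC b a) (X Y Z : V n) :
    Af BG BC X Y Z = Af BG BC Y X Z := by
  simp only [Af, df]
  linear_combination bf_symm12 BG BC hQhh X.1 Y.1 Z.2 + bf_symm12 BG BC hQhh Y.1 Z.1 X.2
    + bf_symm12 BG BC hQhh Z.1 X.1 Y.2 + cf_symm23 BG BC hQhv X.1 Y.2 Z.2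
    + cf_symm23 BG BC hQhv Y.1 Z.2 X.2 + cf_symm23 BG BC hQhv Z.1 X.2 Y.2
    + sgen_swap12 hQvv X.2 Y.2 Z.2

lemma Af_swap23 (hQhh : ∀ a b, Qhh BG BC a b = Qhh BG BC b a)
    (hQhv : ∀ a b, Qhv BG BC a b = Qhv BG BC b a)
    (hQvv : ∀ a b, Qvv BC a b = Qvv BC b a) (X Y Z : V n) :
    Af BG BC X Y Z = Af BG BC X Z Y := by
  simp only [Af, df]
  linear_combination bf_symm12 BG BC hQhh X.1 Y.1 Z.2 + bf_symm12 BG BC hQhh Y.1 Z.1 X.2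
    + bf_symm12 BG BC hQhh Z.1 X.1 Y.2 + cf_symm23 BG BC hQhv X.1 Y.2 Z.2
    + cf_symm23 BG BC hQhv Y.1 Z.2 X.2 + cf_symm23 BG BC hQhv Z.1 X.2 Y.2
    + sgen_swap23 hQvv X.2 Y.2 Z.2

lemma key_bf (hGanti : ∀ a b c, Gf BG a b c = - Gf BG a c b)
    (hGcyc : ∀ a b c, Gf BG a b c + Gf BG b c a + Gf BG c a b = 0)
    (hQ : ∀ a b, Qhh BG BC a b = Qhh BG BC b a) (x y z : Fin n → ℝ) :
    2 * (bf BG BC x y z - bf BG BC x z y) = Gf BG x y z := by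
  simp only [bf]
  linear_combination 2 * sgen_swap23 hQ x y z - (1/3) * hGanti x y z
    + (1/3) * hGanti y x z - (1/3) * hGcyc x y z

lemma key_cf (hHanti : ∀ a b c, Hf BG a b c = - Hf BG a c b)
    (hHcyc : ∀ a b c, Hf BG a b c + Hf BG b c a + Hf BG c a b = 0)
    (hQ : ∀ a b, Qhv BG BC a b = Qhv BG BC b a) (xv y z : Fin n → ℝ) :
    2 * (cf BG BC y z xv - cf BG BC z y xv) = Hf BG xv y z := by
  simp only [cf]
  linear_combination 2 * sgen_swap12 hQ y z xv - (1/3) * hHanti xv y z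
    - (1/3) * hHcyc xv y z + (1/3) * hHanti z xv y

lemma bf_slice (hQ : ∀ a b, Qhh BG BC a b = Qhh BG BC b a) (hn : 1 ≤ n)
    (x y : Fin n → ℝ) : bf BG BC x y (dl n) = Bhh BC x y := by
  simp only [bf]
  rw [sgen_slice hQ hn]
  simp only [Qhh]; ring

lemma cf_slice (hQ : ∀ a b, Qhv BG BC a b = Qhv BG BC b a) (hn : 1 ≤ n)
    (a b : Fin n → ℝ) : cf BG BC a b (dl n) = Bhv BC a b := by
  simp only [cf]
  rw [sgen_slice hQ hn]
  simp only [Qhv]; ring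

lemma df_slice (hQ : ∀ a b, Qvv BC a b = Qvv BC b a) (hn : 1 ≤ n)
    (a b : Fin n → ℝ) : df BC a b (dl n) = Bvv BC a b := by
  simp only [df]
  rw [sgen_slice hQ hn]
  rfl

end Rap


open Rap

/-- exactness of the symbol sequence for the extended Rapcsák
operator: a pair `(B_Γ, B_C)` lies in the image of `σ₃(P₂)` iff it lies in the
kernel of `τ₂`. -/
theorem sigma3P2_exact (n : ℕ) (hn : 1 ≤ n) (BG : Tri n) (BC : Bil n)
    (hanti : ∀ X Y Z, BG X Y Z = - BG X Z Y)
    (hsb1 : ∀ X (y : Fin n → ℝ) Z, BG X (0, y) Z = 0)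
    (hsb2 : ∀ X Y (z : Fin n → ℝ), BG X Y (0, z) = 0)
    (hBCsym : ∀ X Y, BC X Y = BC Y X) :
    (∃ A : Tri n,
      (∀ X Y Z, A X Y Z = A Y X Z) ∧ (∀ X Y Z, A X Y Z = A X Z Y) ∧
      (∀ X Y Z, BG X Y Z = 2 * (A X (Ph n Y) (Jmap n Z) - A X (Ph n Z) (Jmap n Y))) ∧
      (∀ X Y, BC X Y = A X Y (Cvec n)))
    ↔
    ((∀ X Y Z, BG (Ph n X) Y Z + BG (Ph n Y) Z X + BG (Ph n Z) X Y = 0) ∧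
     (∀ X Y Z, BG (Jmap n X) Y Z + BG (Jmap n Y) Z X + BG (Jmap n Z) X Y = 0) ∧
     (∀ X Y, (1 / 2 : ℝ) * BG (Cvec n) X Y
       - BC (Ph n X) (Jmap n Y) + BC (Ph n Y) (Jmap n X) = 0)) := by
  constructor
  · rintro ⟨A, hs1, hs2, hBGeq, hBCeq⟩
    have h13 : ∀ a b c, A a b c = A c b a := by
      intro a b c; rw [hs2, hs1, hs2]
    have hcyc : ∀ a b c, A a b c = A b c a := by
      intro a b c; rw [hs1, hs2]
    refine ⟨?_, ?_, ?_⟩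
    · intro X Y Z
      linarith [hBGeq (Ph n X) Y Z, hBGeq (Ph n Y) Z X, hBGeq (Ph n Z) X Y,
        hs1 (Ph n X) (Ph n Y) (Jmap n Z), hs1 (Ph n X) (Ph n Z) (Jmap n Y),
        hs1 (Ph n Y) (Ph n Z) (Jmap n X)]
    · intro X Y Z
      linarith [hBGeq (Jmap n X) Y Z, hBGeq (Jmap n Y) Z X, hBGeq (Jmap n Z) X Y,
        h13 (Jmap n X) (Ph n Y) (Jmap n Z), h13 (Jmap n X) (Ph n Z) (Jmap n Y),
        h13 (Jmap n Y) (Ph n X) (Jmap n Z)]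
    · intro X Y
      linarith [hBGeq (Cvec n) X Y, hBCeq (Ph n X) (Jmap n Y), hBCeq (Ph n Y) (Jmap n X),
        hcyc (Cvec n) (Ph n X) (Jmap n Y), hcyc (Cvec n) (Ph n Y) (Jmap n X)]
  · rintro ⟨c1, c2, c3⟩
    have hGanti : ∀ a b c, Gf BG a b c = - Gf BG a c b := fun a b c => hanti _ _ _
    have hHanti : ∀ a b c, Hf BG a b c = - Hf BG a c b := fun a b c => hanti _ _ _
    have hGcyc : ∀ a b c, Gf BG a b c + Gf BG b c a + Gf BG c a b = 0 :=
      fun a b c => c1 (a, 0) (b, 0) (c, 0)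
    have hHcyc : ∀ a b c, Hf BG a b c + Hf BG b c a + Hf BG c a b = 0 :=
      fun a b c => c2 (a, 0) (b, 0) (c, 0)
    have h3 : ∀ x y, (1/2 : ℝ) * Hf BG (dl n) x y - Bhv BC x y + Bhv BC y x = 0 :=
      fun x y => c3 (x, 0) (y, 0)
    have hBhh : ∀ a b, Bhh BC a b = Bhh BC b a := fun a b => hBCsym _ _
    have hBvv : ∀ a b, Bvv BC a b = Bvv BC b a := fun a b => hBCsym _ _
    have hQhh := Qhh_symm BG BC hBhh
    have hQhv := Qhv_symm BG BC hHanti hHcyc h3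
    have hQvv := Qvv_symm BC hBvv
    have edec : ∀ W : V n, W = ((W.1, 0) : V n) + ((0, W.2) : V n) := by
      intro W; rw [Prod.mk_add_mk, add_zero, zero_add]
    have hL : ∀ X Y Z : V n, BG X Y Z = Gf BG X.1 Y.1 Z.1 + Hf BG X.2 Y.1 Z.1 := by
      intro X Y Z
      conv_lhs => rw [edec X, edec Y, edec Z]
      simp only [map_add, LinearMap.add_apply, hsb1, hsb2, add_zero, zero_add]
      rfl
    have hA : ∀ X Y Z : V n, Af BG BC X (Ph n Y) (Jmap n Z)
        = bf BG BC X.1 Y.1 Z.1 + cf BG BC Y.1 Z.1 X.2 := by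
      intro X Y Z
      simp [Af, Ph_apply, Jmap_apply, bf_zero1, bf_zero2, cf_zero1, cf_zero2, df_zero2]
    refine ⟨Atri BG BC, ?_, ?_, ?_, ?_⟩
    · intro X Y Z
      rw [Atri_apply, Atri_apply]
      exact Af_swap12 BG BC hQhh hQhv hQvv X Y Z
    · intro X Y Z
      rw [Atri_apply, Atri_apply]
      exact Af_swap23 BG BC hQhh hQhv hQvv X Y Z
    · intro X Y Z
      rw [Atri_apply, Atri_apply, hL X Y Z, hA X Y Z, hA X Z Y]
      linarith [key_bf BG BC hGanti hGcyc hQhh X.1 Y.1 Z.1,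
        key_cf BG BC hHanti hHcyc hQhv X.2 Y.1 Z.1]
    · intro X Y
      have hD : BC X Y = Bhh BC X.1 Y.1 + Bhv BC X.1 Y.2 + Bhv BC Y.1 X.2
          + Bvv BC X.2 Y.2 := by
        conv_lhs => rw [edec X, edec Y]
        simp only [map_add, LinearMap.add_apply, Bhh, Bhv, Bvv]
        linear_combination hBCsym ((0, X.2) : V n) ((Y.1, 0) : V n)
      have hA2 : Af BG BC X Y (Cvec n)
          = bf BG BC X.1 Y.1 (dl n) + cf BG BC X.1 Y.2 (dl n)
            + cf BG BC Y.1 (dl n) X.2 + df BC X.2 Y.2 (dl n) := by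
        have hCv : (Cvec n : V n) = ((0 : Fin n → ℝ), dl n) := rfl
        rw [hCv]
        simp [Af, bf_zero1, bf_zero2, cf_zero1]
      rw [Atri_apply, hA2, hD, bf_slice BG BC hQhh hn, cf_slice BG BC hQhv hn,
        cf_symm23 BG BC hQhv Y.1 (dl n) X.2, cf_slice BG BC hQhv hn,
        df_slice BC hQvv hn]
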